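/- arXiv:2507.05474 — 5 statements merged into one kernel-verified Lean document; each statement's English description precedes it below -/
import Mathlib

section
/- Let G be a group acting on itself by left translation. If L ⊆ G is infinite and for every g ∈ G the symmetric difference gL △ L is finite, then L is left thick, i.e., for every finite F ⊆ G the intersection ⋂_{g ∈ F} gL is nonempty. -/
open Pointwise
open scoped symmDiff

/-- If `L ⊆ G` is infinite and `gL △ L` is finite for every `g`, then `L` is left thick:
every finite family of left translates of `L` has nonempty intersection. -/
theorem leftThick_of_infinite_of_finite_symmDiff {G : Type*} [Group G] (L : Set G)
    (hL : L.Infinite) (h : ∀ g : G, ((g • L) ∆ L).Finite) :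
    ∀ F : Finset G, (⋂ g ∈ F, g • L).Nonempty := by
  intro F
  have hS : (⋃ g ∈ F, ((g • L) ∆ L)).Finite :=
    Set.Finite.biUnion F.finite_toSet fun g _ => h g
  obtain ⟨x, hxL, hxS⟩ := (hL.diff hS).nonempty
  refine ⟨x, Set.mem_iInter₂.2 fun g hg => ?_⟩
  by_contra hx
  exact hxS (Set.mem_biUnion hg (Or.inr ⟨hxL, hx⟩))
end

section
/- Let G be a group acting by homeomorphisms on a compact Hausdorff space Z, let H ≤ G be a subgroup of finite index, and let z ∈ Z be a point with dense G-orbit. If z is recurrent for the G-action, then z is recurrent for the restricted H-action, i.e., for every open U containing z, the set {h ∈ H : h·z ∈ U} is infinite. -/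
/-!
In a T1 space, `z` is recurrent for a group `K` iff its `K`-stabilizer is infinite or `z` is an
accumulation point of its `K`-orbit. An infinite stabilizer meets the finite index subgroup `H`
in an infinite subgroup. For accumulation, pass to the normal core `N` of `H`: the `G`-orbit is
covered by the finitely many sets `g • (N • z) = N • (g • z)`, so `z` accumulates on one of them.
Then `z ∈ closure (N • (g • z))`, and since `g` acts on closures of `N`-orbits and some power of `g`
lies in `N`, also `g • z ∈ closure (N • z)`; hence `z` accumulates on `N • z ⊆ H • z`.
-/

open Pointwise Filter Topology

theorem accPt_principal_iUnion_iff {X ι : Type*} [TopologicalSpace X] [Finite ι] {x : X}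
    {s : ι → Set X} : AccPt x (𝓟 (⋃ i, s i)) ↔ ∃ i, AccPt x (𝓟 (s i)) := by
  simp only [accPt_iff_frequently, Set.mem_iUnion, ← exists_and_left]
  exact frequently_exists

namespace MulAction

def IsRecurrentPt (G : Type*) {Z : Type*} [SMul G Z] [TopologicalSpace Z] (z : Z) : Prop :=
  ∀ U : Set Z, IsOpen U → z ∈ U → {g : G | g • z ∈ U}.Infinite

variable {G Z : Type*} [Group G] [MulAction G Z]

theorem infinite_stabilizer_of_finiteIndex {H : Subgroup G} [H.FiniteIndex] {z : Z}
    (h : Infinite (stabilizer G z)) : Infinite (stabilizer H z) := by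
  have : Infinite (H.subgroupOf (stabilizer G z)) := by
    by_contra! hfin
    have := (Subgroup.finite_iff_finite_and_finiteIndex (H.subgroupOf (stabilizer G z))).2
      ⟨hfin, inferInstance⟩
    exact not_finite (stabilizer G z)
  exact Infinite.of_injective
    (fun s : H.subgroupOf (stabilizer G z) => (⟨⟨s.1.1, s.2⟩, s.1.2⟩ : stabilizer H z))
    fun s t hst => Subtype.ext (Subtype.ext (congrArg (fun u : stabilizer H z => (u : G)) hst))

theorem orbit_subset_iUnion_smul_orbit (N : Subgroup G) (z : Z) :
    orbit G z ⊆ ⋃ q : G ⧸ N, q.out • orbit N z := by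
  rintro _ ⟨g, rfl⟩
  obtain ⟨n, hn⟩ := QuotientGroup.mk_out_eq_mul N g
  refine Set.mem_iUnion.2 ⟨g, n⁻¹ • z, mem_orbit z n⁻¹, ?_⟩
  simp [hn, Subgroup.smul_def, smul_smul]

variable [TopologicalSpace Z]

theorem isRecurrentPt_iff [T1Space Z] {z : Z} :
    IsRecurrentPt G z ↔ Infinite (stabilizer G z) ∨ AccPt z (𝓟 (orbit G z)) := by
  constructor
  · intro hrec
    by_contra! h
    obtain ⟨hfin, hacc⟩ := h
    obtain ⟨V, hV, hVz⟩ : ∃ V ∈ 𝓝 z, ∀ y ∈ V ∩ orbit G z, y = z := by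
      simpa [accPt_iff_nhds] using hacc
    obtain ⟨U, hUV, hU, hzU⟩ := mem_nhds_iff.1 hV
    exact hrec U hU hzU <| (Set.toFinite (stabilizer G z : Set G)).subset
      fun g hg => hVz _ ⟨hUV hg, mem_orbit z g⟩
  · rintro (hstab | hacc) U hU hzU
    · refine Set.Infinite.mono (fun g (hg : g • z = z) => ?_) (Set.infinite_coe_iff.1 hstab)
      simpa [hg] using hzU
    · have hinf : (U ∩ orbit G z).Infinite := .of_accPt (hacc.nhds_inter (hU.mem_nhds hzU))
      refine Set.Infinite.of_image (fun g : G => g • z) (hinf.mono ?_)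
      rintro _ ⟨hyU, g, rfl⟩
      exact ⟨g, hyU, rfl⟩

variable [ContinuousConstSMul G Z]

instance _root_.Subgroup.continuousConstSMul (N : Subgroup G) : ContinuousConstSMul N Z :=
  ⟨fun n => continuous_const_smul (n : G)⟩

theorem closure_orbit_subset_of_mem {x y : Z} (h : x ∈ closure (orbit G y)) :
    closure (orbit G x) ⊆ closure (orbit G y) := by
  refine closure_minimal ?_ isClosed_closure
  rintro _ ⟨g, rfl⟩
  simpa only [← closure_smul, smul_orbit] using Set.smul_mem_smul_set (a := g) h

theorem smul_mem_closure_orbit_of_pow_mem {N : Subgroup G} [N.Normal] {g : G} {k : ℕ}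
    (hk : k ≠ 0) (hgk : g ^ k ∈ N) {x : Z} (hx : x ∈ closure (orbit N (g • x))) :
    g • x ∈ closure (orbit N x) := by
  -- `C j = g ^ j • C 0` increases with `j`, and `C k = C 0` because `g ^ k ∈ N`.
  set C : ℕ → Set Z := fun j => closure (orbit N (g ^ j • x))
  have step (j : ℕ) : g ^ j • x ∈ C (j + 1) := by
    have := Set.smul_mem_smul_set (a := g ^ j) hx
    rwa [← closure_smul, smul_orbit_eq_orbit_smul, smul_smul, ← pow_succ] at this
  have hC : Monotone C := monotone_nat_of_le_succ fun j => closure_orbit_subset_of_mem (step j)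
  have hgx : g • x ∈ C 1 := by simpa [C] using subset_closure (mem_orbit_self (M := N) (g • x))
  have hCk : C k = C 0 := by
    simp only [C, pow_zero, one_smul]
    exact congrArg closure (orbit_smul (⟨g ^ k, hgk⟩ : N) x)
  simpa [C, hCk] using hC (Nat.one_le_iff_ne_zero.2 hk) hgx

theorem accPt_orbit_of_normal [T1Space Z] (N : Subgroup G) [N.Normal] [N.FiniteIndex] {z : Z}
    (h : AccPt z (𝓟 (orbit G z))) : AccPt z (𝓟 (orbit N z)) := by
  obtain ⟨q, hq⟩ := accPt_principal_iUnion_iff.1 (h.mono (principal_mono.2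
    (orbit_subset_iUnion_smul_orbit N z)))
  rw [smul_orbit_eq_orbit_smul] at hq
  have hz : z ∈ closure (orbit N (q.out • z)) := mem_closure_iff_clusterPt.2 hq.clusterPt
  have hqz : q.out • z ∈ closure (orbit N z) :=
    smul_mem_closure_orbit_of_pow_mem Subgroup.FiniteIndex.index_ne_zero
      (N.pow_index_mem q.out) hz
  rw [← mem_derivedSet, ← derivedSet_closure]
  exact hq.mono (principal_mono.2 (subset_closure.trans (closure_orbit_subset_of_mem hqz)))

theorem accPt_orbit_of_finiteIndex [T1Space Z] (H : Subgroup G) [H.FiniteIndex] {z : Z}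
    (h : AccPt z (𝓟 (orbit G z))) : AccPt z (𝓟 (orbit H z)) := by
  refine (accPt_orbit_of_normal H.normalCore h).mono (principal_mono.2 ?_)
  rintro _ ⟨n, rfl⟩
  exact ⟨⟨n, H.normalCore_le n.2⟩, rfl⟩

end MulAction

theorem recurrent_finite_index_general {G Z : Type*} [Group G] [TopologicalSpace Z]
    [T2Space Z] [MulAction G Z] [ContinuousConstSMul G Z]
    (H : Subgroup G) [H.FiniteIndex]
    (z : Z)
    (hrec : ∀ U : Set Z, IsOpen U → z ∈ U → {g : G | g • z ∈ U}.Infinite) :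
    ∀ U : Set Z, IsOpen U → z ∈ U → {h : H | (h : G) • z ∈ U}.Infinite := by
  open MulAction in
  suffices IsRecurrentPt H z from this
  rcases isRecurrentPt_iff.1 hrec with hstab | hacc
  · exact isRecurrentPt_iff.2 (.inl (infinite_stabilizer_of_finiteIndex hstab))
  · exact isRecurrentPt_iff.2 (.inr (accPt_orbit_of_finiteIndex H hacc))

/-- A transitive point which is recurrent for a `G`-action is recurrent for the restriction
of the action to a finite index subgroup `H ≤ G`. -/
theorem recurrent_finite_index {G Z : Type*} [Group G] [TopologicalSpace Z]
    [CompactSpace Z] [T2Space Z] [MulAction G Z] [ContinuousConstSMul G Z]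
    (H : Subgroup G) [H.FiniteIndex]
    (z : Z) (hz : closure (MulAction.orbit G z) = Set.univ)
    (hrec : ∀ U : Set Z, IsOpen U → z ∈ U → {g : G | g • z ∈ U}.Infinite) :
    ∀ U : Set Z, IsOpen U → z ∈ U → {h : H | (h : G) • z ∈ U}.Infinite :=
  recurrent_finite_index_general H z hrec
end

section
/- (B. H. Neumann) Let G be a group and H ≤ G a subgroup of infinite index. Then for any finite subsets F₁, F₂ ⊆ G there exists g ∈ G with gF₁H ∩ F₂H = ∅. -/
open Pointwise

/-- B. H. Neumann's lemma: if `H ≤ G` has infinite index, then for all finite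
`F₁ F₂ ⊆ G` there is `g` with `g F₁ H ∩ F₂ H = ∅`. -/
theorem neumann_lemma {G : Type*} [Group G] (H : Subgroup G) [Infinite (G ⧸ H)]
    (F₁ F₂ : Finset G) :
    ∃ g : G, Disjoint (g • ((F₁ : Set G) * (H : Set G))) ((F₂ : Set G) * (H : Set G)) := by
  classical
  by_contra hcon
  push_neg at hcon
  set ι := F₁ × F₂ with hι
  set K : ι → Subgroup G := fun i => H.map (MulEquiv.toMonoidHom (MulAut.conj (i.1 : G))) with hK
  set c : ι → G := fun i => (i.2 : G) * (i.1 : G)⁻¹ with hc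
  have hcov : ⋃ i ∈ (Finset.univ : Finset ι), c i • (K i : Set G) = Set.univ := by
    rw [Set.eq_univ_iff_forall]
    intro g
    obtain ⟨x, hx1, hx2⟩ := Set.not_disjoint_iff.mp (hcon g)
    obtain ⟨y, hy, hxy⟩ := hx1
    obtain ⟨f₁, hf₁, h₁, hh₁, hy'⟩ := hy
    obtain ⟨f₂, hf₂, h₂, hh₂, hx'⟩ := hx2
    simp only [Set.mem_iUnion]
    refine ⟨(⟨f₁, hf₁⟩, ⟨f₂, hf₂⟩), Finset.mem_univ _, ?_⟩
    rw [mem_leftCoset_iff]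
    simp only [hc, hK, SetLike.mem_coe, Subgroup.mem_map]
    refine ⟨h₂ * h₁⁻¹, mul_mem hh₂ (inv_mem hh₁), ?_⟩
    simp only [MulEquiv.toMonoidHom_eq_coe, MonoidHom.coe_coe, MulAut.conj_apply]
    subst hxy
    rw [← hy'] at hx'
    simp only [smul_eq_mul] at hx' hy' ⊢
    have hg : g = f₂ * h₂ * (f₁ * h₁)⁻¹ := by rw [hx']; group
    rw [hg]
    group
  obtain ⟨i, _, hfin⟩ := Subgroup.exists_finiteIndex_of_leftCoset_cover hcov
  have : H.index = 0 := Subgroup.index_eq_zero_iff_infinite.mpr inferInstance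
  have hKi : (K i).index = 0 := by
    show (H.map (MulEquiv.toMonoidHom (MulAut.conj (i.1 : G)))).index = 0
    rw [Subgroup.index_map_of_injective H ((MulAut.conj (i.1 : G)).injective), this, zero_mul]
  exact hfin.index_ne_zero hKi
end

section
/- Let M be an integer matrix (a linear map Z^m → Z^n extended to R^m → R^n). If the homogeneous system Mx = 0 admits a solution x ∈ R^m with all coordinates strictly positive, then it admits a solution y ∈ Z^m with all coordinates strictly positive. -/
/-!
The real kernel of an integer matrix is spanned by its rational kernel: the rank of a matrix can
only grow under a field extension, so the real kernel is no bigger than the real span of the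
rational kernel, which it contains. As `ℚ` is dense in `ℝ`, the rational kernel vectors are then
dense in the real kernel, so the open positive orthant, which meets the real kernel, contains a
rational kernel vector. Clearing denominators makes it integral.
-/

open Module Submodule Set

section FieldExtension

variable {K L : Type*} [Field K] [Field L] [Algebra K L]

theorem finrank_span_le_finrank_span_image_algebraMap_comp {ι : Type*} [Finite ι]
    (s : Set (ι → K)) :
    finrank K (span K s) ≤ finrank L (span L ((algebraMap K L ∘ ·) '' s)) := by
  obtain ⟨b, hbs, hspan, hind⟩ := exists_linearIndependent K s
  have : Fintype b := have := hind.finite; Fintype.ofFinite b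
  have hind' : LinearIndependent L fun x : b => algebraMap K L ∘ (x : ι → K) :=
    linearIndependent_algebraMap_comp_iff.mpr hind
  calc finrank K (span K s) = Fintype.card b := by
        rw [← hspan, ← finrank_span_eq_card hind, Subtype.range_coe]
    _ = finrank L (span L (range fun x : b => algebraMap K L ∘ (x : ι → K))) :=
        (finrank_span_eq_card hind').symm
    _ ≤ finrank L (span L ((algebraMap K L ∘ ·) '' s)) := by
        refine Submodule.finrank_mono (span_mono ?_)
        rintro _ ⟨x, rfl⟩
        exact ⟨x, hbs x.2, rfl⟩

theorem span_image_algebraMap_comp_subset_closure [TopologicalSpace L] [IsTopologicalRing L]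
    (hK : DenseRange (algebraMap K L)) {ι : Type*} (W : Submodule K (ι → K)) :
    ((span L ((algebraMap K L ∘ ·) '' W) : Submodule L (ι → L)) : Set (ι → L)) ⊆
      closure ((algebraMap K L ∘ ·) '' W) := by
  intro x hx
  obtain ⟨k, c, g, rfl⟩ := mem_span_set'.mp hx
  choose w hwW hw using fun j => (g j).2
  set φ : (Fin k → L) → ι → L := fun c => ∑ j, c j • (g j : ι → L)
  have hφ : Continuous φ :=
    continuous_finsetSum _ fun j _ => (continuous_apply j).smul continuous_const
  have hφK (q : Fin k → K) : φ (algebraMap K L ∘ q) = algebraMap K L ∘ ∑ j, q j • w j := by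
    ext i
    simp [φ, ← hw, Finset.sum_apply]
  have hdense : DenseRange (Pi.map fun _ : Fin k => algebraMap K L) :=
    DenseRange.piMap fun _ => hK
  refine closure_mono ?_ (image_closure_subset_closure_image hφ ⟨c, hdense c, rfl⟩)
  rintro _ ⟨_, ⟨q, rfl⟩, rfl⟩
  exact ⟨_, sum_mem fun j _ => W.smul_mem _ (hwW j), (hφK q).symm⟩

namespace Matrix

variable {m n : Type*} [Fintype m] [Fintype n]

theorem rank_le_rank_map_algebraMap (A : Matrix m n K) :
    A.rank ≤ (A.map (algebraMap K L)).rank := by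
  have := finrank_span_le_finrank_span_image_algebraMap_comp (L := L) (range A.col)
  rw [← range_comp, ← rank_eq_finrank_span_cols] at this
  rwa [rank_eq_finrank_span_cols (A.map _)]

theorem ker_mulVecLin_map_algebraMap (A : Matrix m n K) :
    LinearMap.ker (A.map (algebraMap K L)).mulVecLin =
      span L ((algebraMap K L ∘ ·) '' LinearMap.ker A.mulVecLin) := by
  refine (eq_of_le_of_finrank_le ?_ ?_).symm
  · rw [span_le]
    rintro _ ⟨v, hv, rfl⟩
    ext i
    simp only [SetLike.mem_coe, LinearMap.mem_ker, mulVecLin_apply] at hv ⊢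
    rw [← RingHom.map_mulVec, hv, Pi.zero_apply, Pi.zero_apply, map_zero]
  · have hK := LinearMap.finrank_range_add_finrank_ker A.mulVecLin
    have hL := LinearMap.finrank_range_add_finrank_ker (A.map (algebraMap K L)).mulVecLin
    have hrank := rank_le_rank_map_algebraMap (L := L) A
    have hspan := finrank_span_le_finrank_span_image_algebraMap_comp (L := L)
      (LinearMap.ker A.mulVecLin : Set (n → K))
    rw [span_eq] at hspan
    rw [rank, rank] at hrank
    simp only [finrank_pi] at hK hL
    omega

end Matrix

end FieldExtension

theorem exists_pos_nat_mul_eq_intCast {ι : Type*} [Fintype ι] (y : ι → ℚ) :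
    ∃ N : ℕ, 0 < N ∧ ∃ z : ι → ℤ, ∀ i, (z i : ℚ) = N * y i := by
  refine ⟨∏ i, (y i).den, Finset.prod_pos fun i _ => (y i).pos, ?_⟩
  choose t ht using fun i => Finset.dvd_prod_of_mem (fun i => (y i).den) (Finset.mem_univ i)
  refine ⟨fun i => (y i).num * t i, fun i => ?_⟩
  push_cast [ht i]
  rw [← Rat.mul_den_eq_num]
  ring

namespace Matrix

theorem exists_pos_rat_mulVec_eq_zero {m n : Type*} [Fintype m] [Fintype n] (A : Matrix m n ℚ)
    {x : n → ℝ} (hx : A.map (algebraMap ℚ ℝ) *ᵥ x = 0) (hpos : ∀ i, 0 < x i) :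
    ∃ y : n → ℚ, A *ᵥ y = 0 ∧ ∀ i, 0 < y i := by
  have hxcl : x ∈ closure ((algebraMap ℚ ℝ ∘ ·) '' LinearMap.ker A.mulVecLin) :=
    span_image_algebraMap_comp_subset_closure Rat.denseRange_cast _
      (by rw [← ker_mulVecLin_map_algebraMap]; exact hx)
  have hopen : IsOpen (univ.pi fun _ : n => Ioi (0 : ℝ)) :=
    isOpen_set_pi finite_univ fun _ _ => isOpen_Ioi
  obtain ⟨_, hypos, y, hy, rfl⟩ := mem_closure_iff.mp hxcl _ hopen fun i _ => hpos i
  exact ⟨y, hy, fun i => by simpa using hypos i (mem_univ i)⟩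

theorem exists_pos_int_mulVec_eq_zero_of_rat {m n : Type*} [Fintype n] (A : Matrix m n ℤ)
    {y : n → ℚ} (hy : A.map (Int.cast : ℤ → ℚ) *ᵥ y = 0) (hpos : ∀ i, 0 < y i) :
    ∃ z : n → ℤ, A *ᵥ z = 0 ∧ ∀ i, 0 < z i := by
  obtain ⟨N, hN, z, hz⟩ := exists_pos_nat_mul_eq_intCast y
  have hzy : Int.cast ∘ z = (N : ℚ) • y := funext hz
  refine ⟨z, funext fun a => ?_, fun i => ?_⟩
  · have := RingHom.map_mulVec (Int.castRingHom ℚ) A z a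
    rw [Int.coe_castRingHom, hzy, mulVec_smul, hy, smul_zero] at this
    exact Int.cast_eq_zero.mp this
  · have : (0 : ℚ) < z i := by rw [hz]; exact mul_pos (by exact_mod_cast hN) (hpos i)
    exact_mod_cast this

end Matrix

/-- If a homogeneous integer linear system has a strictly positive real solution,
then it has a strictly positive integer solution. -/
theorem pos_int_solution_of_pos_real_solution {n m : ℕ} (M : Matrix (Fin n) (Fin m) ℤ)
    (h : ∃ x : Fin m → ℝ, (M.map (Int.cast : ℤ → ℝ)).mulVec x = 0 ∧ ∀ i, 0 < x i) :
    ∃ y : Fin m → ℤ, M.mulVec y = 0 ∧ ∀ i, 0 < y i := by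
  obtain ⟨x, hx, hpos⟩ := h
  have hmap : (M.map (Int.cast : ℤ → ℚ)).map (algebraMap ℚ ℝ) = M.map (Int.cast : ℤ → ℝ) := by
    ext; simp
  obtain ⟨y, hy, hypos⟩ :=
    (M.map (Int.cast : ℤ → ℚ)).exists_pos_rat_mulVec_eq_zero (hmap ▸ hx) hpos
  exact M.exists_pos_int_mulVec_eq_zero_of_rat hy hypos
end

section
/- Let K ≤ H be finite groups and let K act on a finite set A with |A| ≤ [H : K]. Then there exists a free, transitive action of H on a finite set B together with a K-equivariant surjection B → A. -/
/-! Let `H` act on itself by left multiplication, which is free and transitive. If `T` is a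
right transversal of `K`, every element of `H` is uniquely `k * t` with `k ∈ K`, `t ∈ T`, so
any map `f : T → A` extends `K`-equivariantly by `k * t ↦ k • f t`. Since
`|T| = [H : K] ≥ |A|`, `f` can be chosen surjective. (If `A` is empty, take `B` empty.) -/

namespace Subgroup.IsComplement

variable {G : Type*} [Group G] {K : Subgroup G} {T : Set G} {A : Type*} [MulAction K A]

noncomputable def extendEquivariant (hT : IsComplement (K : Set G) T) (f : T → A) :
    G →[K] A where
  toFun g := (hT.equiv g).1 • f (hT.equiv g).2
  map_smul' k g := by
    simp only [smul_def, smul_eq_mul, hT.equiv_mul_left, id, mul_smul]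

theorem extendEquivariant_apply_of_mem (hT : IsComplement (K : Set G) T) (f : T → A) {t : G}
    (ht : t ∈ T) : hT.extendEquivariant f t = f ⟨t, ht⟩ := by
  change (hT.equiv t).1 • f (hT.equiv t).2 = _
  rw [hT.equiv_fst_eq_one_of_mem_of_one_mem K.one_mem ht,
    hT.equiv_snd_eq_self_of_mem_of_one_mem K.one_mem ht]
  exact one_smul K _

theorem surjective_extendEquivariant (hT : IsComplement (K : Set G) T) {f : T → A}
    (hf : Function.Surjective f) : Function.Surjective (hT.extendEquivariant f) := fun a ↦ by
  obtain ⟨⟨t, ht⟩, rfl⟩ := hf a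
  exact ⟨t, hT.extendEquivariant_apply_of_mem f ht⟩

end Subgroup.IsComplement

theorem Subgroup.exists_surjective_equivariant_of_card_le_index {G : Type*} [Group G]
    (K : Subgroup G) (A : Type*) [MulAction K A] [Finite A] [Nonempty A]
    (hA : Nat.card A ≤ K.index) : ∃ π : G →[K] A, Function.Surjective π := by
  obtain ⟨T, hT, -⟩ := K.exists_isComplement_right 1
  have hT_card : Nat.card T = K.index := hT.card_right
  have : Finite T := Nat.finite_of_card_ne_zero (by have := Nat.card_pos (α := A); omega)
  obtain ⟨e⟩ : Nonempty (A ↪ T) := by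
    have := Fintype.ofFinite A
    have := Fintype.ofFinite T
    exact Function.Embedding.nonempty_of_card_le
      (by simpa only [← Nat.card_eq_fintype_card, hT_card])
  exact ⟨hT.extendEquivariant (Function.invFun e),
    hT.surjective_extendEquivariant (Function.invFun_surjective e.injective)⟩

/-- If `K ≤ H` are finite groups and `K` acts on a finite set `A` with `|A| ≤ [H : K]`,
then there is a free transitive `H`-action on a finite set `B` together with a
`K`-equivariant surjection `B → A`. -/
theorem extend_action_free_transitive {H : Type} [Group H] [Fintype H] (K : Subgroup H)
    (A : Type) [Fintype A] [MulAction K A] (hA : Fintype.card A ≤ K.index) :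
    ∃ (B : Type) (_ : Fintype B) (ρ : H →* Equiv.Perm B) (π : B → A),
      Function.Surjective π ∧
      (∀ (h : H) (b : B), ρ h b = b → h = 1) ∧
      (∀ b₁ b₂ : B, ∃ h : H, ρ h b₁ = b₂) ∧
      (∀ (k : K) (b : B), π (ρ (k : H) b) = k • π b) := by
  rcases isEmpty_or_nonempty A with hA₀ | hA₀
  · exact ⟨Empty, inferInstance, 1, isEmptyElim, isEmptyElim, fun _ ↦ isEmptyElim,
      isEmptyElim, fun _ ↦ isEmptyElim⟩
  obtain ⟨π, hπ⟩ := K.exists_surjective_equivariant_of_card_le_index A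
    (by rwa [Nat.card_eq_fintype_card])
  refine ⟨H, inferInstance, MulAction.toPermHom H H, π, hπ, fun h b hb ↦ mul_eq_right.mp hb,
    fun b₁ b₂ ↦ ⟨b₂ * b₁⁻¹, by simp⟩, fun k b ↦ π.map_smul k b⟩
end
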